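/- arXiv:1306.3134 — 4 statements merged into one kernel-verified Lean document; each statement's English description precedes it below -/
import Mathlib

section
/- Let k ≥ 2, let D_1,…,D_k be deviation functions, and suppose T = W⊙F is opposition k-partite: there is a partition of {1,…,n} into k pairwise disjoint sets N₁,…,N_k such that W_{ij} > 0 with i,j in the same set N_ℓ implies F_{ij} = id, and W_{ij} > 0 with i ∈ N_ℓ, j ∈ N_m, ℓ ≠ m, implies F_{ij} = D_ℓ. If s_1,…,s_k ∈ ℝ satisfy D_ℓ(s_m) = s_ℓ for all ℓ ≠ m, then the vector p defined by p_i = s_ℓ for i ∈ N_ℓ satisfies T p = p. -/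
theorem sum_mul_eq_of_sum_eq_one {ι : Type*} [Fintype ι] {w f : ι → ℝ} {c : ℝ}
    (hw : ∑ j, w j = 1) (hf : ∀ j, w j ≠ 0 → f j = c) : ∑ j, w j * f j = c := by
  calc ∑ j, w j * f j = ∑ j, w j * c := by
        refine Finset.sum_congr rfl fun j _ => ?_
        by_cases hj : w j = 0
        · simp [hj]
        · rw [hf j hj]
    _ = c := by rw [← Finset.sum_mul, hw, one_mul]

theorem partite_contribution_eq {ι κ : Type*} {W : ι → ι → ℝ} {F : ι → ι → ℝ → ℝ}
    {D : κ → ℝ → ℝ} {N : κ → Set ι} {s : κ → ℝ} {p : ι → ℝ}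
    (hsame : ∀ ℓ, ∀ i ∈ N ℓ, ∀ j ∈ N ℓ, 0 < W i j → F i j = id)
    (hcross : ∀ ℓ m, ℓ ≠ m → ∀ i ∈ N ℓ, ∀ j ∈ N m, 0 < W i j → F i j = D ℓ)
    (hs : ∀ ℓ m, ℓ ≠ m → D ℓ (s m) = s ℓ) (hp : ∀ ℓ, ∀ i ∈ N ℓ, p i = s ℓ)
    {ℓ m : κ} {i j : ι} (hi : i ∈ N ℓ) (hj : j ∈ N m) (hW : 0 < W i j) :
    F i j (p j) = s ℓ := by
  rw [hp m j hj]
  obtain rfl | hℓm := eq_or_ne ℓ m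
  · rw [hsame ℓ i hi j hj hW, id]
  · rw [hcross ℓ m hℓm i hi j hj hW, hs ℓ m hℓm]

theorem stmt_5_general (n k : ℕ)
    (W : Matrix (Fin n) (Fin n) ℝ)
    (hW0 : ∀ i j, 0 ≤ W i j) (hW1 : ∀ i, ∑ j, W i j = 1)
    (D : Fin k → ℝ → ℝ)
    (F : Fin n → Fin n → ℝ → ℝ)
    (T : (Fin n → ℝ) → Fin n → ℝ)
    (hT : ∀ b i, T b i = ∑ j, W i j * F i j (b j))
    (N : Fin k → Finset (Fin n))
    (hcover : ∀ i, ∃ ℓ, i ∈ N ℓ)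
    (hsame : ∀ ℓ, ∀ i ∈ N ℓ, ∀ j ∈ N ℓ, 0 < W i j → F i j = id)
    (hcross : ∀ ℓ m, ℓ ≠ m → ∀ i ∈ N ℓ, ∀ j ∈ N m, 0 < W i j → F i j = D ℓ)
    (s : Fin k → ℝ) (hs : ∀ ℓ m, ℓ ≠ m → D ℓ (s m) = s ℓ)
    (p : Fin n → ℝ) (hp : ∀ ℓ, ∀ i ∈ N ℓ, p i = s ℓ) :
    T p = p := by
  funext i
  obtain ⟨ℓ, hi⟩ := hcover i
  rw [hT, hp ℓ i hi]
  refine sum_mul_eq_of_sum_eq_one (hW1 i) fun j hW => ?_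
  obtain ⟨m, hj⟩ := hcover j
  exact partite_contribution_eq (N := fun ℓ => (N ℓ : Set (Fin n))) hsame hcross hs hp hi hj
    (lt_of_le_of_ne (hW0 i j) (Ne.symm hW))

/-- in an opposition `k`-partite network with group-specific
deviation functions, opinions `s₁,…,s_k` with `D_ℓ(s_m) = s_ℓ` for `ℓ ≠ m`,
assigned groupwise, form a fixed point of the update operator. -/
theorem stmt_5 (n k : ℕ) (hn : 2 ≤ n) (hk : 2 ≤ k)
    (W : Matrix (Fin n) (Fin n) ℝ)
    (hW0 : ∀ i j, 0 ≤ W i j) (hW1 : ∀ i, ∑ j, W i j = 1)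
    (D : Fin k → ℝ → ℝ) (hD : ∀ ℓ, D ℓ ≠ id)
    (F : Fin n → Fin n → ℝ → ℝ)
    (T : (Fin n → ℝ) → Fin n → ℝ)
    (hT : ∀ b i, T b i = ∑ j, W i j * F i j (b j))
    (N : Fin k → Finset (Fin n))
    (hdisj : ∀ ℓ m, ℓ ≠ m → Disjoint (N ℓ) (N m))
    (hcover : ∀ i, ∃ ℓ, i ∈ N ℓ)
    (hsame : ∀ ℓ, ∀ i ∈ N ℓ, ∀ j ∈ N ℓ, 0 < W i j → F i j = id)
    (hcross : ∀ ℓ m, ℓ ≠ m → ∀ i ∈ N ℓ, ∀ j ∈ N m, 0 < W i j → F i j = D ℓ)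
    (s : Fin k → ℝ) (hs : ∀ ℓ m, ℓ ≠ m → D ℓ (s m) = s ℓ)
    (p : Fin n → ℝ) (hp : ∀ ℓ, ∀ i ∈ N ℓ, p i = s ℓ) :
    T p = p :=
  stmt_5_general n k W hW0 hW1 D F T hT N hcover hsame hcross s hs p hp
end

section
/- Let A be a signed interaction matrix that is strongly connected and periodic. Then: (i) A is divergent if and only if A is opposition bipartite; (ii) A induces a neutral consensus if and only if A is not opposition bipartite. -/
/-
Since `A` is symmetric with absolute row sums `1`, it is orthogonally diagonalisable with spectrum
in `[-1, 1]` (Gershgorin). An eigenvector `v` for `1` satisfies `|A| |v| = |v|`, so by strong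
connectivity it vanishes nowhere, and equality in the triangle inequality makes every
`v i * A i j * v j` nonnegative: the sign pattern of `v` is an opposition-bipartite partition.
Conversely, the `±1` signature vector of such a partition is fixed by `A`.

A symmetric matrix with nonzero rows has closed walks of length `2`, so periodicity means period
`2`: the graph of `A` is bipartite, and the diagonal `±1` matrix `D` of the bipartition
anticommutes with `A`, exchanging the eigenvalues `1` and `-1`. Hence if `A` is opposition
bipartite, `D s` is a `-1`-eigenvector whose orbit oscillates; otherwise every eigenvalue lies
in `(-1, 1)` and `A ^ t → 0`.
-/

open Filter

variable {n : ℕ}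

/-- Entrywise absolute value of a matrix. -/
def absMat (A : Matrix (Fin n) (Fin n) ℝ) : Matrix (Fin n) (Fin n) ℝ :=
  A.map fun x => |x|

/-- `A` is strongly connected: for all `i j` there is `k ≥ 1` with `(|A|^k)_{ij} > 0`. -/
def StronglyConnected (A : Matrix (Fin n) (Fin n) ℝ) : Prop :=
  ∀ i j, ∃ k : ℕ, 1 ≤ k ∧ 0 < (absMat A ^ k) i j

/-- `A` is aperiodic: for each `i`, the gcd of `{k ≥ 1 : (|A|^k)_{ii} > 0}` is `1`,
phrased as: every common divisor of that set equals `1`. -/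
def Aperiodic (A : Matrix (Fin n) (Fin n) ℝ) : Prop :=
  ∀ i, ∀ d : ℕ, (∀ k : ℕ, 1 ≤ k → 0 < (absMat A ^ k) i i → d ∣ k) → d = 1

/-- `A` is opposition bipartite: a two-set partition (given by `S` and its
complement) with nonnegative entries within sets and nonpositive across. -/
def OppBip (A : Matrix (Fin n) (Fin n) ℝ) : Prop :=
  ∃ S : Set (Fin n), ∀ i j,
    (((i ∈ S ∧ j ∈ S) ∨ (i ∉ S ∧ j ∉ S)) → 0 ≤ A i j) ∧
    (((i ∈ S ∧ j ∉ S) ∨ (i ∉ S ∧ j ∈ S)) → A i j ≤ 0)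

/-- `A` is reverse opposition bipartite: nonpositive entries within sets and
nonnegative across. -/
def RevOppBip (A : Matrix (Fin n) (Fin n) ℝ) : Prop :=
  ∃ S : Set (Fin n), ∀ i j,
    (((i ∈ S ∧ j ∈ S) ∨ (i ∉ S ∧ j ∉ S)) → A i j ≤ 0) ∧
    (((i ∈ S ∧ j ∉ S) ∨ (i ∉ S ∧ j ∈ S)) → 0 ≤ A i j)

/-- `A` is divergent: some initial vector has no limit under iteration. -/
def Divergent (A : Matrix (Fin n) (Fin n) ℝ) : Prop :=
  ∃ b₀ : Fin n → ℝ, ¬ ∃ L : Fin n → ℝ,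
    Tendsto (fun t => (A ^ t).mulVec b₀) atTop (nhds L)

/-- `A` induces a neutral consensus: iterates converge to `0` from every start. -/
def NeutralConsensus (A : Matrix (Fin n) (Fin n) ℝ) : Prop :=
  ∀ b₀ : Fin n → ℝ, Tendsto (fun t => (A ^ t).mulVec b₀) atTop (nhds 0)

/-- A vector is a polarization if its entries take at most two values. -/
def IsPolarization (p : Fin n → ℝ) : Prop :=
  ∃ a b : ℝ, ∀ i, p i = a ∨ p i = b

/-- `A` induces a nontrivial polarization: from every start the limit exists
and is a polarization, and from some start the limit is nonzero. -/
def InducesNontrivialPolarization (A : Matrix (Fin n) (Fin n) ℝ) : Prop :=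
  (∀ b₀ : Fin n → ℝ, ∃ L : Fin n → ℝ,
      Tendsto (fun t => (A ^ t).mulVec b₀) atTop (nhds L) ∧ IsPolarization L) ∧
  (∃ (b₀ L : Fin n → ℝ),
      Tendsto (fun t => (A ^ t).mulVec b₀) atTop (nhds L) ∧ L ≠ 0)

open Matrix Topology

section Spectral

variable {𝕜 ι : Type*} [RCLike 𝕜] [Fintype ι] [DecidableEq ι]

theorem Matrix.IsHermitian.tendsto_pow_atTop_nhds_zero {A : Matrix ι ι 𝕜} (hA : A.IsHermitian)
    (h : ∀ i, |hA.eigenvalues i| < 1) : Tendsto (A ^ ·) atTop (𝓝 0) := by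
  have hdiag : Tendsto (fun t : ℕ => diagonal (RCLike.ofReal ∘ hA.eigenvalues) ^ t) atTop
      (𝓝 (0 : Matrix ι ι 𝕜)) := by
    simp_rw [diagonal_pow, ← diagonal_zero]
    refine (continuous_id.matrix_diagonal.tendsto _).comp (tendsto_pi_nhds.2 fun i => ?_)
    exact tendsto_pow_atTop_nhds_zero_of_norm_lt_one (by simpa using h i)
  set U : Matrix ι ι 𝕜 := ↑hA.eigenvectorUnitary
  have hpow : (A ^ ·) = fun t => U * diagonal (RCLike.ofReal ∘ hA.eigenvalues) ^ t * star U := by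
    funext t
    nth_rewrite 1 [hA.spectral_theorem]
    rw [← map_pow, Unitary.conjStarAlgAut_apply]
  have hconj : Continuous fun M : Matrix ι ι 𝕜 => U * M * star U := by fun_prop
  rw [hpow]
  simpa [Function.comp_def] using (hconj.tendsto 0).comp hdiag

end Spectral

section Sequences

variable {E : Type*} [NormedAddCommGroup E] [IsAddTorsionFree E]

theorem eq_zero_of_tendsto_of_succ_eq_neg {x : ℕ → E} {L : E} (hx : ∀ t, x (t + 1) = -x t)
    (hL : Tendsto x atTop (𝓝 L)) : x 0 = 0 := by
  have hL0 : L = 0 := by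
    refine self_eq_neg.mp (tendsto_nhds_unique (hL.comp (tendsto_add_atTop_nat 1)) ?_)
    simpa only [Function.comp_def, hx] using hL.neg
  have hnorm : ∀ t, ‖x t‖ = ‖x 0‖ := by
    intro t
    induction t with
    | zero => rfl
    | succ t ih => rw [hx, norm_neg, ih]
  have hnormL := tendsto_nhds_unique hL.norm (by simp only [hnorm]; exact tendsto_const_nhds)
  simpa [hL0, eq_comm] using hnormL

end Sequences

section Eigenvectors

variable {ι : Type*} [Fintype ι]

theorem Matrix.pow_mulVec_of_mulVec_eq_smul {R : Type*} [CommSemiring R] [DecidableEq ι]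
    {A : Matrix ι ι R} {μ : R} {v : ι → R} (hv : A *ᵥ v = μ • v) (k : ℕ) :
    (A ^ k) *ᵥ v = μ ^ k • v := by
  induction k with
  | zero => simp
  | succ k ih => rw [pow_succ', ← mulVec_mulVec, ih, mulVec_smul, hv, smul_smul, pow_succ]

theorem Matrix.mulVec_mulVec_eq_neg_smul {R : Type*} [CommRing R] {A D : Matrix ι ι R}
    (hAD : A * D = -(D * A)) {μ : R} {v : ι → R} (hv : A *ᵥ v = μ • v) :
    A *ᵥ (D *ᵥ v) = (-μ) • (D *ᵥ v) := by
  rw [mulVec_mulVec, hAD, neg_mulVec, ← mulVec_mulVec, hv, mulVec_smul, neg_smul]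

theorem Matrix.mulVec_ne_zero_of_mul_self_eq_one {R : Type*} [CommRing R] [DecidableEq ι]
    {D : Matrix ι ι R} (hD : D * D = 1) {v : ι → R} (hv : v ≠ 0) : D *ᵥ v ≠ 0 := by
  intro h
  exact hv (by simpa [mulVec_mulVec, hD] using congrArg (D *ᵥ ·) h)

theorem abs_le_one_of_mulVec_eq_smul [DecidableEq ι] {A : Matrix ι ι ℝ}
    (hrow : ∀ i, ∑ j, |A i j| ≤ 1) {μ : ℝ} {v : ι → ℝ} (hv0 : v ≠ 0) (hv : A *ᵥ v = μ • v) :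
    |μ| ≤ 1 := by
  have hμ : Module.End.HasEigenvalue (toLin' A) μ :=
    Module.End.hasEigenvalue_of_hasEigenvector
      ⟨Module.End.mem_eigenspace_iff.mpr (by simpa using hv), hv0⟩
  obtain ⟨k, hk⟩ := eigenvalue_mem_ball hμ
  rw [Metric.mem_closedBall, Real.dist_eq] at hk
  calc |μ| ≤ |A k k| + |μ - A k k| := by
        simpa using abs_add_le (A k k) (μ - A k k)
    _ ≤ ∑ j, |A k j| := by
        rw [← Finset.add_sum_erase _ _ (Finset.mem_univ k)]
        simp only [Real.norm_eq_abs] at hk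
        linarith
    _ ≤ 1 := hrow k

end Eigenvectors

section SignedGraph

variable {A : Matrix (Fin n) (Fin n) ℝ}

lemma absMat_apply (i j : Fin n) : absMat A i j = |A i j| := rfl

lemma absMat_nonneg (i j : Fin n) : 0 ≤ absMat A i j := abs_nonneg _

lemma absMat_isSymm (hsym : A.IsSymm) : (absMat A).IsSymm := hsym.map _

lemma absMat_pow_add_pos {a b : ℕ} {i m j : Fin n} (ha : 0 < (absMat A ^ a) i m)
    (hb : 0 < (absMat A ^ b) m j) : 0 < (absMat A ^ (a + b)) i j := by
  rw [pow_add, mul_apply]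
  exact Finset.sum_pos' (fun l _ => mul_nonneg (pow_apply_nonneg absMat_nonneg a i l)
    (pow_apply_nonneg absMat_nonneg b l j)) ⟨m, Finset.mem_univ m, mul_pos ha hb⟩

lemma absMat_pow_one_pos {i j : Fin n} (h : A i j ≠ 0) : 0 < (absMat A ^ 1) i j := by
  simpa [absMat_apply] using h

lemma oppBip_of_mul_nonneg {v : Fin n → ℝ} (hv : ∀ i, v i ≠ 0)
    (h : ∀ i j, 0 ≤ v i * A i j * v j) : OppBip A := by
  have hneg : ∀ i, ¬ 0 < v i → v i < 0 := fun i hi => (not_lt.mp hi).lt_of_ne (hv i)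
  refine ⟨{i | 0 < v i}, fun i j => ⟨?_, ?_⟩⟩ <;> rintro (⟨hi, hj⟩ | ⟨hi, hj⟩) <;>
    simp only [Set.mem_ofPred_eq] at hi hj <;> have := h i j
  · nlinarith [mul_pos hi hj]
  · nlinarith [mul_pos_of_neg_of_neg (hneg i hi) (hneg j hj)]
  · nlinarith [mul_neg_of_pos_of_neg hi (hneg j hj)]
  · nlinarith [mul_neg_of_neg_of_pos (hneg i hi) hj]

lemma OppBip.exists_sign_vector (h : OppBip A) :
    ∃ s : Fin n → ℝ, (∀ i, |s i| = 1) ∧ ∀ i j, 0 ≤ s i * A i j * s j := by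
  classical
  obtain ⟨S, hS⟩ := h
  refine ⟨fun i => if i ∈ S then 1 else -1, fun i => by dsimp only; split_ifs <;> simp,
    fun i j => ?_⟩
  by_cases hi : i ∈ S <;> by_cases hj : j ∈ S <;> simp only [hi, hj, if_true, if_false]
  · simpa using (hS i j).1 (Or.inl ⟨hi, hj⟩)
  · simpa using (hS i j).2 (Or.inl ⟨hi, hj⟩)
  · simpa using (hS i j).2 (Or.inr ⟨hi, hj⟩)
  · simpa using (hS i j).1 (Or.inr ⟨hi, hj⟩)

lemma OppBip.exists_mulVec_eq_self (hrow : ∀ i, ∑ j, |A i j| = 1) (h : OppBip A) :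
    ∃ s : Fin n → ℝ, (∀ i, |s i| = 1) ∧ A *ᵥ s = s := by
  obtain ⟨s, hs, hsA⟩ := h.exists_sign_vector
  refine ⟨s, hs, funext fun i => ?_⟩
  have hsq : ∀ i, s i * s i = 1 := fun i => by rw [← abs_mul_abs_self, hs, one_mul]
  have hterm : ∀ j, A i j * s j = s i * |A i j| := fun j => by
    have hsAs : s i * A i j * s j = |A i j| := by
      rw [← abs_of_nonneg (hsA i j)]
      simp [abs_mul, hs]
    linear_combination s i * hsAs - (A i j * s j) * hsq i
  simp only [mulVec, dotProduct, hterm, ← Finset.mul_sum, hrow, mul_one]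

end SignedGraph

section Balance

variable {A : Matrix (Fin n) (Fin n) ℝ} {v : Fin n → ℝ}

lemma absMat_mulVec_abs_eq (hsym : A.IsSymm) (hrow : ∀ i, ∑ j, |A i j| = 1)
    (hv : A *ᵥ v = v) : absMat A *ᵥ |v| = |v| := by
  have hle : ∀ i ∈ Finset.univ, |v| i ≤ (absMat A *ᵥ |v|) i := fun i _ =>
    calc |v| i = |∑ j, A i j * v j| := by rw [Pi.abs_apply, ← congrFun hv i]; rfl
      _ ≤ ∑ j, |A i j * v j| := Finset.abs_sum_le_sum_abs _ _
      _ = (absMat A *ᵥ |v|) i := by simp [mulVec, dotProduct, absMat_apply, abs_mul]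
  have hsum : ∑ i, |v| i = ∑ i, (absMat A *ᵥ |v|) i := by
    simp only [mulVec, dotProduct, absMat_apply, Pi.abs_apply]
    rw [Finset.sum_comm]
    refine Finset.sum_congr rfl fun j _ => ?_
    have hcol : ∑ i, |A i j| = 1 := by simp_rw [hsym.apply j]; exact hrow j
    rw [← Finset.sum_mul, hcol, one_mul]
  exact funext fun i => ((Finset.sum_eq_sum_iff_of_le hle).mp hsum i (Finset.mem_univ i)).symm

lemma ne_zero_of_absMat_mulVec_abs_eq (hsc : StronglyConnected A) (hv0 : v ≠ 0)
    (h : absMat A *ᵥ |v| = |v|) (i : Fin n) : v i ≠ 0 := by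
  intro hvi
  obtain ⟨j, hj⟩ := Function.ne_iff.mp hv0
  obtain ⟨k, -, hk⟩ := hsc i j
  have hzero : ∑ l, (absMat A ^ k) i l * |v l| = 0 := by
    simpa [mulVec, dotProduct, hvi] using
      congrFun (pow_mulVec_of_mulVec_eq_smul (A := absMat A) (μ := 1) (v := |v|)
        (by rw [one_smul]; exact h) k) i
  have hterm := (Finset.sum_eq_zero_iff_of_nonneg fun l _ => mul_nonneg
    (pow_apply_nonneg absMat_nonneg k i l) (abs_nonneg _)).mp hzero j (Finset.mem_univ j)
  exact (mul_pos hk (abs_pos.mpr hj)).ne' hterm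

lemma mul_mul_nonneg_of_absMat_mulVec_abs_eq (hv : A *ᵥ v = v) (h : absMat A *ᵥ |v| = |v|)
    (i j : Fin n) : 0 ≤ v i * A i j * v j := by
  set x : Fin n → ℝ := fun l => v i * (A i l * v l)
  have hsum : ∑ l, x l = ∑ l, |x l| :=
    calc ∑ l, x l = v i * v i := by rw [← Finset.mul_sum, ← congrFun hv i]; rfl
      _ = |v i| * (absMat A *ᵥ |v|) i := by rw [h, Pi.abs_apply, abs_mul_abs_self]
      _ = ∑ l, |x l| := by simp [x, mulVec, dotProduct, Finset.mul_sum, absMat_apply, abs_mul]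
  have hxj := (Finset.sum_eq_sum_iff_of_le fun l _ => le_abs_self (x l)).mp hsum j
    (Finset.mem_univ j)
  rw [mul_assoc]
  change 0 ≤ x j
  rw [hxj]
  exact abs_nonneg _

theorem oppBip_of_mulVec_eq_self (hsym : A.IsSymm) (hrow : ∀ i, ∑ j, |A i j| = 1)
    (hsc : StronglyConnected A) (hv0 : v ≠ 0) (hv : A *ᵥ v = v) : OppBip A := by
  have h := absMat_mulVec_abs_eq hsym hrow hv
  exact oppBip_of_mul_nonneg (ne_zero_of_absMat_mulVec_abs_eq hsc hv0 h)
    (mul_mul_nonneg_of_absMat_mulVec_abs_eq hv h)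

end Balance

section Periodic

variable {A : Matrix (Fin n) (Fin n) ℝ}

lemma exists_even_returns_of_not_aperiodic (hsym : A.IsSymm) (hrow : ∀ i, ∑ j, |A i j| = 1)
    (hper : ¬ Aperiodic A) : ∃ i₀, ∀ k, 0 < (absMat A ^ k) i₀ i₀ → Even k := by
  obtain ⟨i₀, d, hd, hd1⟩ :
      ∃ i₀ d, (∀ k, 1 ≤ k → 0 < (absMat A ^ k) i₀ i₀ → d ∣ k) ∧ d ≠ 1 := by
    simpa [Aperiodic] using hper
  obtain ⟨j, hj⟩ : ∃ j, A i₀ j ≠ 0 := by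
    by_contra! h
    simpa [h] using hrow i₀
  have hret : 0 < (absMat A ^ (1 + 1)) i₀ i₀ :=
    absMat_pow_add_pos (absMat_pow_one_pos hj) (absMat_pow_one_pos (by rwa [hsym.apply i₀ j]))
  have hd2 : d = 2 :=
    ((Nat.dvd_prime Nat.prime_two).mp (hd 2 one_le_two hret)).resolve_left hd1
  refine ⟨i₀, fun k hk => ?_⟩
  rcases Nat.eq_zero_or_pos k with rfl | hk0
  · exact ⟨0, rfl⟩
  · exact even_iff_two_dvd.mpr (hd2 ▸ hd k hk0 hk)

lemma exists_sign_flip_of_even_returns (hsym : A.IsSymm) (hsc : StronglyConnected A)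
    {i₀ : Fin n} (heven : ∀ k, 0 < (absMat A ^ k) i₀ i₀ → Even k) :
    ∃ e : Fin n → ℝ, (∀ i, e i = 1 ∨ e i = -1) ∧ ∀ i j, A i j ≠ 0 → e j = -e i := by
  -- colour `i` by the parity of one walk from `i₀` to `i`; every such walk has that parity,
  -- since going back along another one closes an (even) walk at `i₀`
  choose len _ hlen using hsc i₀
  have hparity : ∀ {a j}, 0 < (absMat A ^ a) i₀ j → (Even a ↔ Even (len j)) := by
    intro a j ha
    have hback : 0 < (absMat A ^ len j) j i₀ := by
      rw [((absMat_isSymm hsym).pow _).apply]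
      exact hlen j
    exact Nat.even_add.mp (heven _ (absMat_pow_add_pos ha hback))
  refine ⟨fun i => (-1) ^ len i, fun i => neg_one_pow_eq_or ℝ _, fun i j hij => ?_⟩
  have hij_parity := hparity (absMat_pow_add_pos (hlen i) (absMat_pow_one_pos hij))
  change (-1 : ℝ) ^ len j = -(-1) ^ len i
  rw [neg_one_pow_congr hij_parity.symm, pow_succ, mul_neg_one]

lemma exists_involution_anticommuting (hsym : A.IsSymm) (hrow : ∀ i, ∑ j, |A i j| = 1)
    (hsc : StronglyConnected A) (hper : ¬ Aperiodic A) :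
    ∃ D : Matrix (Fin n) (Fin n) ℝ, D * D = 1 ∧ A * D = -(D * A) := by
  obtain ⟨i₀, heven⟩ := exists_even_returns_of_not_aperiodic hsym hrow hper
  obtain ⟨e, he, hflip⟩ := exists_sign_flip_of_even_returns hsym hsc heven
  refine ⟨diagonal e, ?_, ?_⟩
  · rw [diagonal_mul_diagonal, ← diagonal_one]
    congr 1
    funext i
    rcases he i with h | h <;> simp [h]
  · ext i j
    rw [Matrix.neg_apply, mul_diagonal, diagonal_mul]
    by_cases hij : A i j = 0
    · simp [hij]
    · rw [hflip i j hij]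
      ring

end Periodic

section Dynamics

variable {A : Matrix (Fin n) (Fin n) ℝ}

lemma NeutralConsensus.not_divergent (h : NeutralConsensus A) : ¬ Divergent A :=
  fun ⟨b₀, hb₀⟩ => hb₀ ⟨0, h b₀⟩

lemma abs_eigenvalues_lt_one (hA : A.IsHermitian) (hrow : ∀ i, ∑ j, |A i j| = 1)
    (hsc : StronglyConnected A) (hper : ¬ Aperiodic A) (h : ¬ OppBip A) (i : Fin n) :
    |hA.eigenvalues i| < 1 := by
  have hsym : A.IsSymm := isHermitian_iff_isSymm.mp hA
  obtain ⟨D, hDD, hAD⟩ := exists_involution_anticommuting hsym hrow hsc hper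
  have hv0 : (⇑(hA.eigenvectorBasis i) : Fin n → ℝ) ≠ 0 := fun h0 =>
    hA.eigenvectorBasis.orthonormal.ne_zero i (by ext j; simpa using congrFun h0 j)
  have hv := hA.mulVec_eigenvectorBasis i
  refine (abs_le_one_of_mulVec_eq_smul (fun k => (hrow k).le) hv0 hv).lt_of_ne fun h1 => h ?_
  rcases (abs_eq zero_le_one).mp h1 with h1 | h1 <;> rw [h1] at hv
  · exact oppBip_of_mulVec_eq_self hsym hrow hsc hv0 (by simpa using hv)
  · exact oppBip_of_mulVec_eq_self hsym hrow hsc (mulVec_ne_zero_of_mul_self_eq_one hDD hv0)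
      (by simpa using mulVec_mulVec_eq_neg_smul hAD hv)

theorem neutralConsensus_of_not_oppBip (hsym : A.IsSymm) (hrow : ∀ i, ∑ j, |A i j| = 1)
    (hsc : StronglyConnected A) (hper : ¬ Aperiodic A) (h : ¬ OppBip A) :
    NeutralConsensus A := by
  have hA : A.IsHermitian := isHermitian_iff_isSymm.mpr hsym
  have hpow := hA.tendsto_pow_atTop_nhds_zero (abs_eigenvalues_lt_one hA hrow hsc hper h)
  intro b₀
  have hmul : Continuous fun M : Matrix (Fin n) (Fin n) ℝ => M *ᵥ b₀ :=
    continuous_id.matrix_mulVec continuous_const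
  simpa [Function.comp_def] using (hmul.tendsto 0).comp hpow

theorem divergent_of_oppBip (hsym : A.IsSymm) (hrow : ∀ i, ∑ j, |A i j| = 1)
    (hsc : StronglyConnected A) (hper : ¬ Aperiodic A) (h : OppBip A) : Divergent A := by
  obtain ⟨D, hDD, hAD⟩ := exists_involution_anticommuting hsym hrow hsc hper
  obtain ⟨s, hs, hAs⟩ := h.exists_mulVec_eq_self hrow
  obtain ⟨i₀, -⟩ := not_forall.mp hper
  have hs0 : s ≠ 0 := fun h0 => by simpa [h0] using hs i₀
  have hflip : A *ᵥ (D *ᵥ s) = -(D *ᵥ s) := by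
    simpa using mulVec_mulVec_eq_neg_smul hAD (μ := 1) (by simpa using hAs)
  refine ⟨D *ᵥ s, fun ⟨L, hL⟩ => mulVec_ne_zero_of_mul_self_eq_one hDD hs0 ?_⟩
  simpa using eq_zero_of_tendsto_of_succ_eq_neg
    (fun t => by rw [pow_succ, ← mulVec_mulVec, hflip, mulVec_neg]) hL

end Dynamics

theorem stmt_11_general (n : ℕ) (A : Matrix (Fin n) (Fin n) ℝ)
    (hsym : A.IsSymm) (hrow : ∀ i, ∑ j, |A i j| = 1)
    (hsc : StronglyConnected A) (hper : ¬ Aperiodic A) :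
    (Divergent A ↔ OppBip A) ∧
    (NeutralConsensus A ↔ ¬ OppBip A) := by
  have hdiv := divergent_of_oppBip hsym hrow hsc hper
  have hneutral := neutralConsensus_of_not_oppBip hsym hrow hsc hper
  have hexcl : NeutralConsensus A → ¬ Divergent A := NeutralConsensus.not_divergent
  tauto

/-- for a strongly connected, periodic signed interaction matrix:
(i) divergence iff opposition bipartite; (ii) neutral consensus iff not
opposition bipartite. -/
theorem stmt_11 (n : ℕ) (hn : 2 ≤ n) (A : Matrix (Fin n) (Fin n) ℝ)
    (hsym : A.IsSymm) (hdiag : ∀ i, A i i = 0) (hrow : ∀ i, ∑ j, |A i j| = 1)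
    (hsc : StronglyConnected A) (hper : ¬ Aperiodic A) :
    (Divergent A ↔ OppBip A) ∧
    (NeutralConsensus A ↔ ¬ OppBip A) :=
  stmt_11_general n A hsym hrow hsc hper
end

section
/- Let A be a symmetric n×n real matrix with zero diagonal. Then A is opposition bipartite if and only if there exists a diagonal matrix Δ whose diagonal entries all lie in {−1, 1} such that Δ·A·Δ = |A|, where |A| denotes the entrywise absolute value of A. -/
/-!
Encode the partition `S, Sᶜ` by the sign vector `d i = if i ∈ S then 1 else -1`. Then `A` is
opposition bipartite for `S` exactly when every entry of `Δ A Δ` is nonnegative, and since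
`|d i A_ij d j| = |A_ij|`, this says precisely that `Δ A Δ = |A|`.
-/

variable {n : ℕ}

section SignedEntry

variable {R : Type*} [Ring R] [LinearOrder R] [IsOrderedRing R]

theorem mul_mul_eq_abs_iff_nonneg {s t a : R} (hs : |s| = 1) (ht : |t| = 1) :
    s * a * t = |a| ↔ 0 ≤ s * a * t := by
  have habs : |s * a * t| = |a| := by rw [abs_mul, abs_mul, hs, ht, one_mul, mul_one]
  rw [← habs, eq_comm, abs_eq_self]

theorem ite_sign_mul_mul_ite_sign_nonneg_iff (p q : Prop) [Decidable p] [Decidable q] (a : R) :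
    0 ≤ (if p then 1 else -1) * a * (if q then 1 else -1) ↔
      (((p ∧ q) ∨ (¬p ∧ ¬q)) → 0 ≤ a) ∧ (((p ∧ ¬q) ∨ (¬p ∧ q)) → a ≤ 0) := by
  by_cases hp : p <;> by_cases hq : q <;> simp [hp, hq]

theorem Matrix.diagonal_mul_mul_diagonal_eq_map_abs_iff {ι : Type*} [Fintype ι] [DecidableEq ι]
    {A : Matrix ι ι R} {d : ι → R} (hd : ∀ i, |d i| = 1) :
    diagonal d * A * diagonal d = A.map (fun x => |x|) ↔ ∀ i j, 0 ≤ d i * A i j * d j := by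
  simp only [← Matrix.ext_iff, mul_diagonal, diagonal_mul, map_apply]
  exact forall₂_congr fun i j => mul_mul_eq_abs_iff_nonneg (hd i) (hd j)

end SignedEntry

theorem oppBip_iff_exists_sign (A : Matrix (Fin n) (Fin n) ℝ) :
    OppBip A ↔ ∃ d : Fin n → ℝ, (∀ i, d i = 1 ∨ d i = -1) ∧ ∀ i j, 0 ≤ d i * A i j * d j := by
  classical
  constructor
  · rintro ⟨S, hS⟩
    refine ⟨fun i => if i ∈ S then 1 else -1, fun i => by by_cases hi : i ∈ S <;> simp [hi],
      fun i j => ?_⟩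
    exact (ite_sign_mul_mul_ite_sign_nonneg_iff _ _ _).2 (hS i j)
  · rintro ⟨d, hd, hA⟩
    have hd_eq : d = fun i => if d i = 1 then 1 else -1 := by
      funext i
      rcases hd i with h | h <;> simp [h]
    refine ⟨{i | d i = 1}, fun i j => ?_⟩
    rw [hd_eq] at hA
    exact (ite_sign_mul_mul_ite_sign_nonneg_iff _ _ _).1 (hA i j)

theorem stmt_18_general (n : ℕ) (A : Matrix (Fin n) (Fin n) ℝ) :
    OppBip A ↔ ∃ d : Fin n → ℝ, (∀ i, d i = 1 ∨ d i = -1) ∧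
      Matrix.diagonal d * A * Matrix.diagonal d = A.map fun x => |x| := by
  rw [oppBip_iff_exists_sign]
  refine exists_congr fun d => and_congr_right fun hd => ?_
  have hd_abs : ∀ i, |d i| = 1 := fun i => (abs_eq zero_le_one).2 (hd i)
  rw [Matrix.diagonal_mul_mul_diagonal_eq_map_abs_iff hd_abs]

/-- a symmetric matrix with zero diagonal is opposition
bipartite iff a `±1` diagonal similarity transform turns it into its
entrywise absolute value. -/
theorem stmt_18 (n : ℕ) (A : Matrix (Fin n) (Fin n) ℝ)
    (hsym : A.IsSymm) (hdiag : ∀ i, A i i = 0) :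
    OppBip A ↔ ∃ d : Fin n → ℝ, (∀ i, d i = 1 ∨ d i = -1) ∧
      Matrix.diagonal d * A * Matrix.diagonal d = A.map fun x => |x| :=
  stmt_18_general n A
end

section
/- Let A be a strongly connected signed interaction matrix. Then A is opposition bipartite if and only if 1 is an eigenvalue of A, i.e. there exists a nonzero vector x ∈ ℝ^n with A·x = x. -/
/-!
If `A` is opposition bipartite with sides `S`, `Sᶜ`, the sign vector `s = ±1` (`+1` on `S`)
satisfies `s i * A i j * s j = |A i j|`, so `(A s)_i = s i * ∑ j |A i j| = s i`.

Conversely, let `A x = x` with `x ≠ 0`. Since the rows of `|A|` sum to `1`, `|x|` cannot drop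
along an edge leaving a coordinate where it is maximal, so by strong connectivity `|x|` is
constant. Then `x i = ∑ j A i j x j` is an equality case of the triangle inequality, which forces
`x i * A i j * x j ≥ 0` for all `i, j`; the signs of `x` give the bipartition.
-/

variable {n : ℕ}

open Matrix

section General

variable {ι : Type*} [Fintype ι] {A : Matrix ι ι ℝ} {x : ι → ℝ}

lemma mem_of_map_abs_pow_apply_pos [DecidableEq ι] {S : Set ι}
    (hS : ∀ i j, i ∈ S → A i j ≠ 0 → j ∈ S) (k : ℕ) {i j : ι} (hi : i ∈ S)
    (hk : 0 < (A.map (|·|) ^ k) i j) : j ∈ S := by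
  induction k generalizing i with
  | zero =>
    rw [pow_zero, Matrix.one_apply] at hk
    split_ifs at hk with hij
    · exact hij ▸ hi
    · exact absurd hk (lt_irrefl 0)
  | succ k ih =>
    rw [pow_succ', Matrix.mul_apply] at hk
    obtain ⟨l, -, hl⟩ :=
      Finset.exists_lt_of_sum_lt (f := fun _ => (0 : ℝ)) (by simpa using hk)
    have hil : A i l ≠ 0 := fun h => by simp [h] at hl
    exact ih (hS i l hi hil) (pos_of_mul_pos_right hl (abs_nonneg _))

lemma abs_eq_of_isMax_of_mulVec_eq_self {i j : ι} (hrow : ∑ l, |A i l| ≤ 1)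
    (hx : A *ᵥ x = x) (hmax : ∀ l, |x l| ≤ |x i|) (hij : A i j ≠ 0) : |x j| = |x i| := by
  refine le_antisymm (hmax j) (not_lt.mp fun hlt => lt_irrefl |x i| ?_)
  calc |x i| = |∑ l, A i l * x l| := by rw [← congrFun hx i]; rfl
    _ ≤ ∑ l, |A i l| * |x l| := by
        simpa only [abs_mul] using Finset.abs_sum_le_sum_abs (fun l => A i l * x l) _
    _ < ∑ l, |A i l| * |x i| := by
        refine Finset.sum_lt_sum (fun l _ => mul_le_mul_of_nonneg_left (hmax l) (abs_nonneg _))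
          ⟨j, Finset.mem_univ j, mul_lt_mul_of_pos_left hlt (abs_pos.mpr hij)⟩
    _ = (∑ l, |A i l|) * |x i| := Finset.sum_mul _ _ _ |>.symm
    _ ≤ |x i| := mul_le_of_le_one_left (abs_nonneg _) hrow

lemma mul_mul_nonneg_of_mulVec_eq_self {i : ι} (hrow : ∑ l, |A i l| ≤ 1) (hx : A *ᵥ x = x)
    (hconst : ∀ l, |x l| = |x i|) (j : ι) : 0 ≤ x i * A i j * x j := by
  set gap : ι → ℝ := fun l => |A i l| * (|x i| * |x i|) - x i * A i l * x l
  have hgap_nonneg : ∀ l, 0 ≤ gap l := fun l => by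
    have h := le_abs_self (x i * A i l * x l)
    rw [abs_mul, abs_mul, hconst l] at h
    simp only [gap]
    linarith
  have hsum : ∑ l, gap l = (∑ l, |A i l| - 1) * (x i * x i) := by
    have hxi : ∑ l, x i * A i l * x l = x i * x i := by
      simp_rw [mul_assoc, ← Finset.mul_sum]
      exact congrArg (x i * ·) (congrFun hx i)
    simp only [gap, Finset.sum_sub_distrib, ← Finset.sum_mul, hxi, abs_mul_abs_self]
    ring
  have hgap_j : gap j ≤ 0 := calc
    gap j ≤ ∑ l, gap l := Finset.single_le_sum (fun l _ => hgap_nonneg l) (Finset.mem_univ j)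
    _ ≤ 0 := hsum ▸ mul_nonpos_of_nonpos_of_nonneg (by linarith) (mul_self_nonneg _)
  have : 0 ≤ |A i j| * (|x i| * |x i|) := by positivity
  simp only [gap] at hgap_j
  linarith

lemma mulVec_eq_self_of_abs_eq_one {s : ι → ℝ} (hrow : ∀ i, ∑ j, |A i j| = 1)
    (hs : ∀ i, |s i| = 1) (hbal : ∀ i j, 0 ≤ s i * A i j * s j) : A *ᵥ s = s := by
  funext i
  have hsi : s i * s i = 1 := by rw [← abs_mul_abs_self, hs i, one_mul]
  have hterm : ∀ j, s i * A i j * s j = |A i j| := fun j => by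
    rw [← abs_of_nonneg (hbal i j), abs_mul, abs_mul, hs i, hs j, one_mul, mul_one]
  have : s i * (A *ᵥ s) i = 1 := by
    simp only [Matrix.mulVec, dotProduct, Finset.mul_sum, ← mul_assoc, hterm, hrow i]
  calc (A *ᵥ s) i = s i * s i * (A *ᵥ s) i := by rw [hsi, one_mul]
    _ = s i := by rw [mul_assoc, this, mul_one]

end General

lemma OppBip.exists_sign {A : Matrix (Fin n) (Fin n) ℝ} (h : OppBip A) :
    ∃ s : Fin n → ℝ, (∀ i, |s i| = 1) ∧ ∀ i j, 0 ≤ s i * A i j * s j := by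
  classical
  obtain ⟨S, hS⟩ := h
  refine ⟨fun i => if i ∈ S then 1 else -1, fun i => by dsimp only; split_ifs <;> norm_num,
    fun i j => ?_⟩
  by_cases hi : i ∈ S <;> by_cases hj : j ∈ S <;> simp only [hi, hj, if_true, if_false]
  · simpa using (hS i j).1 (Or.inl ⟨hi, hj⟩)
  · simpa using (hS i j).2 (Or.inl ⟨hi, hj⟩)
  · simpa using (hS i j).2 (Or.inr ⟨hi, hj⟩)
  · simpa using (hS i j).1 (Or.inr ⟨hi, hj⟩)

lemma oppBip_of_forall_ne_zero {A : Matrix (Fin n) (Fin n) ℝ} {x : Fin n → ℝ}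
    (hx : ∀ i, x i ≠ 0) (hbal : ∀ i j, 0 ≤ x i * A i j * x j) : OppBip A := by
  have hprod : ∀ i j, 0 ≤ A i j * (x i * x j) := fun i j => by linarith [hbal i j]
  have hneg : ∀ {i}, ¬0 < x i → x i < 0 := fun hi => lt_of_le_of_ne (not_lt.mp hi) (hx _)
  refine ⟨{i | 0 < x i}, fun i j => ⟨?_, ?_⟩⟩
  · rintro (⟨hi, hj⟩ | ⟨hi, hj⟩)
    · exact nonneg_of_mul_nonneg_left (hprod i j) (mul_pos hi hj)
    · exact nonneg_of_mul_nonneg_left (hprod i j) (mul_pos_of_neg_of_neg (hneg hi) (hneg hj))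
  · rintro (⟨hi, hj⟩ | ⟨hi, hj⟩)
    · exact nonpos_of_mul_nonneg_left (hprod i j) (mul_neg_of_pos_of_neg hi (hneg hj))
    · exact nonpos_of_mul_nonneg_left (hprod i j) (mul_neg_of_neg_of_pos (hneg hi) hj)

lemma StronglyConnected.abs_eq_of_mulVec_eq_self {A : Matrix (Fin n) (Fin n) ℝ}
    {x : Fin n → ℝ} (hsc : StronglyConnected A) (hrow : ∀ i, ∑ j, |A i j| ≤ 1)
    (hx : A *ᵥ x = x) (i j : Fin n) : |x i| = |x j| := by
  have : Nonempty (Fin n) := ⟨i⟩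
  obtain ⟨m, hm⟩ := Finite.exists_max fun l => |x l|
  have hS : ∀ a b, a ∈ {l | |x l| = |x m|} → A a b ≠ 0 → b ∈ {l | |x l| = |x m|} :=
    fun a b (ha : |x a| = |x m|) hab =>
      (abs_eq_of_isMax_of_mulVec_eq_self (hrow a) hx (ha ▸ hm) hab).trans ha
  have hreach : ∀ l, |x l| = |x m| := fun l => by
    obtain ⟨k, -, hk⟩ := hsc m l
    exact mem_of_map_abs_pow_apply_pos hS k rfl hk
  rw [hreach i, hreach j]

theorem stmt_19_general (n : ℕ) (hn : 2 ≤ n) (A : Matrix (Fin n) (Fin n) ℝ)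
    (hrow : ∀ i, ∑ j, |A i j| = 1)
    (hsc : StronglyConnected A) :
    OppBip A ↔ ∃ x : Fin n → ℝ, x ≠ 0 ∧ A.mulVec x = x := by
  have hrow_le : ∀ i, ∑ j, |A i j| ≤ 1 := fun i => (hrow i).le
  constructor
  · intro h
    obtain ⟨s, hs, hbal⟩ := h.exists_sign
    refine ⟨s, fun h0 => ?_, mulVec_eq_self_of_abs_eq_one hrow hs hbal⟩
    simpa [h0] using hs ⟨0, by omega⟩
  · rintro ⟨x, hx0, hx⟩
    have hconst := hsc.abs_eq_of_mulVec_eq_self hrow_le hx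
    obtain ⟨i₀, hi₀⟩ := Function.ne_iff.mp hx0
    refine oppBip_of_forall_ne_zero (x := x) (fun i => ?_) fun i j =>
      mul_mul_nonneg_of_mulVec_eq_self (hrow_le i) hx (fun l => hconst l i) j
    exact abs_ne_zero.mp ((hconst i i₀).trans_ne (abs_ne_zero.mpr hi₀))

/-- a strongly connected signed interaction matrix is opposition
bipartite iff `1` is an eigenvalue of `A`. -/
theorem stmt_19 (n : ℕ) (hn : 2 ≤ n) (A : Matrix (Fin n) (Fin n) ℝ)
    (hsym : A.IsSymm) (hdiag : ∀ i, A i i = 0) (hrow : ∀ i, ∑ j, |A i j| = 1)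
    (hsc : StronglyConnected A) :
    OppBip A ↔ ∃ x : Fin n → ℝ, x ≠ 0 ∧ A.mulVec x = x :=
  stmt_19_general n hn A hrow hsc
end
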